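/- Under the spectral gap assumption, for all integers 1 ≤ j < i, the conditional expectation satisfies ‖E[f ∘ T_{[j]} | 𝓕_i]‖_∞ ≤ K τ^{i−j}. -/

import Mathlib

/-!
Setting: `(X, 𝓕, μ)` a probability space, `A` an index set, `T a : X → X` measurable,
surjective, non-invertible, `μ`-preserving maps, and a fixed sequence `a 1, a 2, … ∈ A`.
`T_{[k]} := T_{a_k} ∘ ⋯ ∘ T_{a_1}`.  The Koopman operator `T̂ g = g ∘ T` acts on `L²(μ)` and
the Perron–Frobenius operator `T̂*` is its `L²(μ)`-adjoint.
-/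

open MeasureTheory ProbabilityTheory Filter
open scoped ENNReal Topology

/-- The Koopman operator `g ↦ g ∘ T` on `L²(μ)`. -/
noncomputable def koopman {X : Type*} [MeasurableSpace X] {μ : Measure X} {T : X → X}
    (hT : MeasurePreserving T μ μ) : Lp ℝ 2 μ →L[ℝ] Lp ℝ 2 μ :=
  (Lp.compMeasurePreservingₗᵢ ℝ T hT).toContinuousLinearMap

/-- The Perron–Frobenius operator: the `L²(μ)`-adjoint of the Koopman operator. -/
noncomputable def PF {X : Type*} [MeasurableSpace X] {μ : Measure X} {T : X → X}
    (hT : MeasurePreserving T μ μ) : Lp ℝ 2 μ →L[ℝ] Lp ℝ 2 μ :=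
  ContinuousLinearMap.adjoint (koopman hT)

/-- `Titer T a k = T_{[k]} = T_{a_k} ∘ ⋯ ∘ T_{a_1}` (the identity for `k = 0`). -/
def Titer {X A : Type*} (T : A → X → X) (a : ℕ → A) : ℕ → X → X
  | 0 => id
  | k + 1 => T (a (k + 1)) ∘ Titer T a k

/-- `PFseg hT a i j = T̂*_{[i..j]} = T̂*_{a_j} ⋯ T̂*_{a_i}` for `i ≤ j`, the identity otherwise. -/
noncomputable def PFseg {X A : Type*} [MeasurableSpace X] {μ : Measure X} {T : A → X → X}
    (hT : ∀ b, MeasurePreserving (T b) μ μ) (a : ℕ → A) (i : ℕ) :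
    ℕ → (Lp ℝ 2 μ →L[ℝ] Lp ℝ 2 μ)
  | 0 => ContinuousLinearMap.id ℝ _
  | j + 1 =>
    if i ≤ j + 1 then (PF (hT (a (j + 1)))).comp (PFseg hT a i j)
    else ContinuousLinearMap.id ℝ _

/-- `T̂*_{b_1} ⋯ T̂*_{b_k} g` for a finite sequence `[b_1, …, b_k]`. -/
noncomputable def PFlist {X A : Type*} [MeasurableSpace X] {μ : Measure X} {T : A → X → X}
    (hT : ∀ b, MeasurePreserving (T b) μ μ) (l : List A) (g : Lp ℝ 2 μ) : Lp ℝ 2 μ :=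
  l.foldr (fun b h => PF (hT b) h) g

/-- `useq hT a f k = u_k = ∑_{i=1}^k T̂*_{[i+1..k]} f`. -/
noncomputable def useq {X A : Type*} [MeasurableSpace X] {μ : Measure X} {T : A → X → X}
    (hT : ∀ b, MeasurePreserving (T b) μ μ) (a : ℕ → A) (f : Lp ℝ 2 μ) (k : ℕ) : Lp ℝ 2 μ :=
  ∑ i ∈ Finset.Icc 1 k, PFseg hT a (i + 1) k f

/-- The Birkhoff-like sums `S_n = ∑_{k=1}^n f ∘ T_{[k]}`. -/
def birkhoffS {X A : Type*} (T : A → X → X) (a : ℕ → A) (f : X → ℝ) (n : ℕ) : X → ℝ :=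
  fun x => ∑ k ∈ Finset.Icc 1 n, f (Titer T a k x)

/-- `cos²χ_k = ‖E[u_k | T_{a_{k+1}}^{-1}(𝓕)]‖²_{L²} / ‖u_k‖²_{L²}` (`= 0` when `u_k = 0`,
by the convention `c / 0 = 0`). -/
noncomputable def cos2chi {X A : Type*} [MeasurableSpace X] (μ : Measure X) {T : A → X → X}
    (hT : ∀ b, MeasurePreserving (T b) μ μ) (a : ℕ → A) (f : Lp ℝ 2 μ) (k : ℕ) : ℝ :=
  (∫ x, ((μ[(useq hT a f k : X → ℝ)|MeasurableSpace.comap (T (a (k + 1))) ‹_›]) x) ^ 2 ∂μ) /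
    ∫ x, ((useq hT a f k : X → ℝ) x) ^ 2 ∂μ

/-- `𝓕_k := T_{[k]}^{-1}(𝓕)`, the pullback σ-algebra. -/
def Fsig {X A : Type*} [m0 : MeasurableSpace X] (T : A → X → X) (a : ℕ → A) (k : ℕ) :
    MeasurableSpace X :=
  MeasurableSpace.comap (Titer T a k) m0

/-- `Z_k := u_k ∘ T_{[k]}`. -/
noncomputable def Zfun {X A : Type*} [MeasurableSpace X] {μ : Measure X} {T : A → X → X}
    (hT : ∀ b, MeasurePreserving (T b) μ μ) (a : ℕ → A) (f : Lp ℝ 2 μ) (k : ℕ) : X → ℝ :=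
  fun x => (useq hT a f k : X → ℝ) (Titer T a k x)

/-!
Write `T_{[i]} = R ∘ T_{[j]}` with `R = T_{a_i} ∘ ⋯ ∘ T_{a_{j+1}}`. For measure-preserving `R` and
`S`, the function `(R̂* g) ∘ R ∘ S` is `(R ∘ S)⁻¹𝓕`-measurable and has the same integral as
`g ∘ S` over every set `(R ∘ S)⁻¹ B`, namely `⟪R̂* g, 1_B⟫ = ⟪g, 1_B ∘ R⟫`; hence it is
`E[g ∘ S | (R ∘ S)⁻¹𝓕]`. Composing with the measure-preserving `R ∘ S` does not change the
`L^∞` norm, and `R̂* = T̂*_{a_i} ⋯ T̂*_{a_{j+1}}` is a product of `i - j` transfer operators, to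
which the spectral gap applies.
-/

section PerronFrobenius

variable {X : Type*} [MeasurableSpace X] {μ : Measure X} {R S : X → X}

theorem koopman_apply (hR : MeasurePreserving R μ μ) (g : Lp ℝ 2 μ) :
    koopman hR g = Lp.compMeasurePreserving R hR g :=
  rfl

theorem koopman_id : koopman (.id μ) = ContinuousLinearMap.id ℝ (Lp ℝ 2 μ) := by
  ext1 g
  exact Lp.compMeasurePreserving_id_apply g

theorem koopman_comp (hR : MeasurePreserving R μ μ) (hS : MeasurePreserving S μ μ) :
    koopman (hR.comp hS) = (koopman hS).comp (koopman hR) := by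
  ext1 g
  exact Lp.compMeasurePreserving_comp_apply g hR hS

theorem PF_id : PF (.id μ) = ContinuousLinearMap.id ℝ (Lp ℝ 2 μ) := by
  rw [PF, koopman_id, ContinuousLinearMap.adjoint_id]

theorem PF_comp (hR : MeasurePreserving R μ μ) (hS : MeasurePreserving S μ μ) :
    PF (hR.comp hS) = (PF hR).comp (PF hS) := by
  rw [PF, koopman_comp, ContinuousLinearMap.adjoint_comp, PF, PF]

theorem setIntegral_PF [IsFiniteMeasure μ] (hR : MeasurePreserving R μ μ) (g : Lp ℝ 2 μ)
    {B : Set X} (hB : MeasurableSet B) :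
    ∫ y in B, PF hR g y ∂μ = ∫ y in R ⁻¹' B, g y ∂μ := by
  rw [← L2.inner_indicatorConstLp_one hB (measure_ne_top μ B), real_inner_comm, PF,
    ContinuousLinearMap.adjoint_inner_left, koopman_apply,
    Lp.indicatorConstLp_compMeasurePreserving, real_inner_comm,
    L2.inner_indicatorConstLp_one (hB.preimage hR.measurable)]

theorem MeasureTheory.MeasurePreserving.setIntegral_preimage_comp (hS : MeasurePreserving S μ μ)
    {g : X → ℝ} (hg : AEStronglyMeasurable g μ) {B : Set X} (hB : MeasurableSet B) :
    ∫ x in S ⁻¹' B, g (S x) ∂μ = ∫ y in B, g y ∂μ := by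
  rw [← setIntegral_map hB (hS.map_eq.symm ▸ hg) hS.aemeasurable, hS.map_eq]

theorem condExp_comp_ae_eq_PF_comp [IsFiniteMeasure μ] (hR : MeasurePreserving R μ μ)
    (hS : MeasurePreserving S μ μ) (g : Lp ℝ 2 μ) :
    μ[fun x => g (S x) | MeasurableSpace.comap (R ∘ S) ‹_›] =ᵐ[μ] fun x => PF hR g (R (S x)) := by
  have hRS := hR.comp hS
  have hm := hRS.measurable.comap_le
  have : IsFiniteMeasure (μ.trim hm) := isFiniteMeasure_trim hm
  have hL1 (h : Lp ℝ 2 μ) : Integrable h μ := (Lp.memLp h).integrable one_le_two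
  refine (ae_eq_condExp_of_forall_setIntegral_eq hm
    ((hS.integrable_comp (Lp.aestronglyMeasurable g)).2 (hL1 g))
    (fun _ _ _ => ((hRS.integrable_comp (Lp.aestronglyMeasurable _)).2 (hL1 _)).integrableOn)
    ?_ ?_).symm
  · rintro _ ⟨B, hB, rfl⟩ -
    calc ∫ x in (R ∘ S) ⁻¹' B, PF hR g ((R ∘ S) x) ∂μ
        = ∫ y in B, PF hR g y ∂μ :=
          hRS.setIntegral_preimage_comp (Lp.aestronglyMeasurable _) hB
      _ = ∫ y in R ⁻¹' B, g y ∂μ := setIntegral_PF hR g hB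
      _ = ∫ x in S ⁻¹' (R ⁻¹' B), g (S x) ∂μ :=
          (hS.setIntegral_preimage_comp (Lp.aestronglyMeasurable _)
            (hB.preimage hR.measurable)).symm
  · exact ((Lp.stronglyMeasurable _).comp_measurable
      (measurable_iff_comap_le.mpr le_rfl)).aestronglyMeasurable

end PerronFrobenius

section Words

variable {X A : Type*} {T : A → X → X}

def Tlist (T : A → X → X) : List A → X → X
  | [] => id
  | b :: l => T b ∘ Tlist T l

def segmentRev (a : ℕ → A) (j : ℕ) : ℕ → List A
  | 0 => []
  | d + 1 => a (j + d + 1) :: segmentRev a j d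

theorem length_segmentRev (a : ℕ → A) (j d : ℕ) : (segmentRev a j d).length = d := by
  induction d with
  | zero => rfl
  | succ d ih => simp [segmentRev, ih]

theorem Titer_add (a : ℕ → A) (j d : ℕ) :
    Titer T a (j + d) = Tlist T (segmentRev a j d) ∘ Titer T a j := by
  induction d with
  | zero => rfl
  | succ d ih =>
    show T (a (j + d + 1)) ∘ Titer T a (j + d) = T (a (j + d + 1)) ∘ (Tlist T _ ∘ Titer T a j)
    rw [ih]

variable [MeasurableSpace X] {μ : Measure X}

theorem Titer_measurePreserving (hT : ∀ b, MeasurePreserving (T b) μ μ) (a : ℕ → A) :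
    ∀ k, MeasurePreserving (Titer T a k) μ μ
  | 0 => .id μ
  | k + 1 => (hT (a (k + 1))).comp (Titer_measurePreserving hT a k)

theorem Tlist_measurePreserving (hT : ∀ b, MeasurePreserving (T b) μ μ) :
    ∀ l : List A, MeasurePreserving (Tlist T l) μ μ
  | [] => .id μ
  | b :: l => (hT b).comp (Tlist_measurePreserving hT l)

theorem PFlist_eq_PF_Tlist (hT : ∀ b, MeasurePreserving (T b) μ μ) (l : List A)
    (g : Lp ℝ 2 μ) : PFlist hT l g = PF (Tlist_measurePreserving hT l) g := by
  induction l with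
  | nil =>
    show g = PF (.id μ) g
    rw [PF_id, ContinuousLinearMap.id_apply]
  | cons b l ih =>
    show PF (hT b) (PFlist hT l g) = _
    rw [ih]
    exact (DFunLike.congr_fun (PF_comp (hT b) (Tlist_measurePreserving hT l)) g).symm

end Words

theorem condexp_birkhoff_term_bound_general
    {X : Type*} [MeasurableSpace X] (μ : Measure X) [IsProbabilityMeasure μ]
    {A : Type*} (T : A → X → X)
    (hT : ∀ b, MeasurePreserving (T b) μ μ)
    (a : ℕ → A) (f : Lp ℝ 2 μ)
    (K τ : ℝ)
    (hgap : ∀ l : List A, l ≠ [] →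
      eLpNorm (PFlist hT l f : X → ℝ) ∞ μ ≤ ENNReal.ofReal (K * τ ^ l.length)) :
    ∀ j i : ℕ, 1 ≤ j → j < i →
      eLpNorm (μ[(fun x => (f : X → ℝ) (Titer T a j x))|Fsig T a i]) ∞ μ ≤
        ENNReal.ofReal (K * τ ^ (i - j)) := by
  intro j i _ hji
  obtain ⟨d, rfl⟩ : ∃ d, i = j + d := ⟨i - j, by omega⟩
  have hR := Tlist_measurePreserving hT (segmentRev a j d)
  have hS := Titer_measurePreserving hT a j
  rw [Fsig, Titer_add]
  refine (eLpNorm_congr_ae (condExp_comp_ae_eq_PF_comp hR hS f)).trans_le ?_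
  refine (eLpNorm_comp_measurePreserving (Lp.aestronglyMeasurable _) (hR.comp hS)).trans_le ?_
  have hne : segmentRev a j d ≠ [] := List.ne_nil_of_length_pos (by rw [length_segmentRev]; omega)
  rw [← PFlist_eq_PF_Tlist hT, Nat.add_sub_cancel_left]
  simpa only [length_segmentRev] using hgap _ hne

/-- Under the spectral gap assumption, `‖E[f ∘ T_{[j]} | 𝓕_i]‖_∞ ≤ K τ^{i−j}` for `1 ≤ j < i`. -/
theorem condexp_birkhoff_term_bound
    {X : Type*} [MeasurableSpace X] (μ : Measure X) [IsProbabilityMeasure μ]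
    {A : Type*} (T : A → X → X)
    (hTmeas : ∀ b, Measurable (T b))
    (hT : ∀ b, MeasurePreserving (T b) μ μ)
    (hTsurj : ∀ b, Function.Surjective (T b))
    (hTnoninv : ∀ b, ¬Function.Injective (T b))
    (a : ℕ → A) (f : Lp ℝ 2 μ)
    (hfbdd : eLpNorm (f : X → ℝ) ∞ μ < ∞)
    (hfmean : ∫ x, f x ∂μ = 0)
    (K τ : ℝ) (hτ0 : 0 < τ) (hτ1 : τ < 1)
    (hgap : ∀ l : List A, l ≠ [] →
      eLpNorm (PFlist hT l f : X → ℝ) ∞ μ ≤ ENNReal.ofReal (K * τ ^ l.length)) :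
    ∀ j i : ℕ, 1 ≤ j → j < i →
      eLpNorm (μ[(fun x => (f : X → ℝ) (Titer T a j x))|Fsig T a i]) ∞ μ ≤
        ENNReal.ofReal (K * τ ^ (i - j)) :=
  condexp_birkhoff_term_bound_general μ T hT a f K τ hgap
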